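/- Let M and M' be maximal matchings of a simple graph G with |M △ M'| ≤ 5 such that M = (M' \ F) ∪ {e} ∪ A where e ∈ M \ M', F = M' ∩ Γ(e), and A = M \ ((M' \ F) ∪ {e}). Then A is uniquely determined by M, e, and F, namely A = { f ∈ M \ {e} : f is adjacent to some f' ∈ F }. Consequently, the number of maximal matchings M' arising this way from a fixed M is at most |M| · (Δ choose ≤2)² = O(nΔ²), where Δ is the maximum degree. -/

import Mathlib

open SimpleGraph

variable {V : Type*}

def IsMatchingF (G : SimpleGraph V) (M : Finset (Sym2 V)) : Prop :=
  (∀ e ∈ M, e ∈ G.edgeSet) ∧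
    ∀ e ∈ M, ∀ f ∈ M, e ≠ f → ∀ v : V, v ∈ e → v ∉ f

def IsMaximalMatchingF [DecidableEq V] (G : SimpleGraph V) (M : Finset (Sym2 V)) : Prop :=
  IsMatchingF G M ∧ ∀ e ∈ G.edgeSet, e ∉ M → ¬ IsMatchingF G (insert e M)

/-- `v` is unmatched by the matching `M`. -/
def Unmatched (M : Finset (Sym2 V)) (v : V) : Prop := ∀ e ∈ M, v ∉ e

/-- The graph `G[M₁ △ M₂]` on the symmetric difference of two edge sets. -/
def sdGraph [DecidableEq V] (M₁ M₂ : Finset (Sym2 V)) : SimpleGraph V where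
  Adj v w := v ≠ w ∧ s(v, w) ∈ (M₁ \ M₂) ∪ (M₂ \ M₁)
  symm := by
    constructor
    intro v w h
    exact ⟨h.1.symm, by rw [Sym2.eq_swap]; exact h.2⟩
  loopless := ⟨fun v h => h.1 rfl⟩

/-- The walk `p` is a path which is exactly a connected component of `H`
(it spans the component and uses all of its edges, and has at least one edge). -/
def IsPathComponent [DecidableEq V] (H : SimpleGraph V) {u w : V} (p : H.Walk u w) : Prop :=
  p.IsPath ∧ 1 ≤ p.length ∧
    (∀ x : V, x ∈ p.support ↔ H.connectedComponentMk x = H.connectedComponentMk u) ∧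
    (∀ a b : V, H.Adj a b → a ∈ p.support → s(a, b) ∈ p.edges)

/-- The closed walk `p` is a cycle which is exactly a connected component of `H`. -/
def IsCycleComponent [DecidableEq V] (H : SimpleGraph V) {u : V} (p : H.Walk u u) : Prop :=
  p.IsCycle ∧
    (∀ x : V, x ∈ p.support ↔ H.connectedComponentMk x = H.connectedComponentMk u) ∧
    (∀ a b : V, H.Adj a b → a ∈ p.support → s(a, b) ∈ p.edges)

/-- `M` minus all edges sharing an endpoint with `e` (i.e. `M \ Γ(e)` for `e ∉ M`). -/
def removeAdj [Fintype V] [DecidableEq V] (M : Finset (Sym2 V)) (e : Sym2 V) :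
    Finset (Sym2 V) :=
  M.filter fun f => ¬ ∃ v : V, v ∈ e ∧ v ∈ f

/-- `comp` greedily extends any matching of `G` to a maximal matching containing it. -/
def CompletionFun [DecidableEq V] (G : SimpleGraph V)
    (comp : Finset (Sym2 V) → Finset (Sym2 V)) : Prop :=
  ∀ M : Finset (Sym2 V), IsMatchingF G M → M ⊆ comp M ∧ IsMaximalMatchingF G (comp M)

/-- The arcs of the solution graph 𝒢: from `M` to `comp((M \ Γ(e)) ∪ {e})` for `e ∉ M`. -/
def GStep [Fintype V] [DecidableEq V] (G : SimpleGraph V)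
    (comp : Finset (Sym2 V) → Finset (Sym2 V)) (M M' : Finset (Sym2 V)) : Prop :=
  ∃ e ∈ G.edgeSet, e ∉ M ∧ M' = comp (insert e (removeAdj M e))

/-!
An edge `f ∈ M - e` outside `M' \ F` cannot lie in `M'` (it would be in `F` and meet `e`), so by
maximality of `M'` it meets an edge of `M'`, which cannot lie in `M' \ F ⊆ M`: it lies in `F`.
Conversely an edge of `M - e` meeting `F` is not in `M'`. So `M'` is recovered from `e ∈ M` and
`F`, a set of at most two of the at most `2Δ` edges meeting `e`, and by Vandermonde
`C(2Δ, 2) + 2Δ + 1 = 2 C(Δ, 2) + (Δ + 1)² ≤ (C(Δ, 2) + Δ + 1)²`.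
-/

open Finset

namespace IsMatchingF

variable {G : SimpleGraph V} {M : Finset (Sym2 V)}

lemma eq_of_mem_of_mem (hM : IsMatchingF G M) {e f : Sym2 V} (he : e ∈ M) (hf : f ∈ M)
    {v : V} (hve : v ∈ e) (hvf : v ∈ f) : e = f :=
  by_contra fun hne => hM.2 e he f hf hne v hve hvf

lemma card_filter_meets_le_two [Fintype V] [DecidableEq V] (hM : IsMatchingF G M) (e : Sym2 V) :
    (M.filter fun f => ∃ v : V, v ∈ e ∧ v ∈ f).card ≤ 2 := by
  induction e using Sym2.ind with | _ u w =>
  have hvertex : ∀ x : V, (M.filter fun f => x ∈ f).card ≤ 1 := fun x =>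
    card_le_one.mpr fun a ha b hb =>
      hM.eq_of_mem_of_mem (mem_filter.mp ha).1 (mem_filter.mp hb).1
        (mem_filter.mp ha).2 (mem_filter.mp hb).2
  have hsplit : (M.filter fun f => ∃ v : V, v ∈ s(u, w) ∧ v ∈ f) ⊆
      M.filter (fun f => u ∈ f) ∪ M.filter (fun f => w ∈ f) := by
    intro f hf
    simp only [mem_filter, Sym2.mem_iff] at hf
    obtain ⟨hfM, v, rfl | rfl, hvf⟩ := hf
    · exact mem_union_left _ (mem_filter.mpr ⟨hfM, hvf⟩)
    · exact mem_union_right _ (mem_filter.mpr ⟨hfM, hvf⟩)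
  calc _ ≤ _ := card_le_card hsplit
    _ ≤ _ := card_union_le _ _
    _ ≤ 2 := add_le_add (hvertex u) (hvertex w)

end IsMatchingF

lemma IsMaximalMatchingF.exists_meets_of_notMem [DecidableEq V] {G : SimpleGraph V}
    {M : Finset (Sym2 V)} (hM : IsMaximalMatchingF G M) {f : Sym2 V} (hf : f ∈ G.edgeSet)
    (hfM : f ∉ M) : ∃ g ∈ M, ∃ v : V, v ∈ f ∧ v ∈ g := by
  by_contra! hfree
  refine hM.2 f hf hfM ⟨fun g hg => ?_, fun a ha b hb hab v hva hvb => ?_⟩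
  · rcases mem_insert.mp hg with rfl | hg
    exacts [hf, hM.1.1 g hg]
  · rcases mem_insert.mp ha with rfl | ha' <;> rcases mem_insert.mp hb with rfl | hb'
    · exact hab rfl
    · exact hfree b hb' v hva hvb
    · exact hfree a ha' v hvb hva
    · exact hM.1.2 a ha' b hb' hab v hva hvb

section Child

variable [Fintype V] [DecidableEq V] {G : SimpleGraph V} {M M' : Finset (Sym2 V)} {e : Sym2 V}

/-- The paper's `(M \ (A ∪ {e})) ∪ F`, with `A` the edges of `M - e` meeting `F`. -/
def child (M : Finset (Sym2 V)) (e : Sym2 V) (F : Finset (Sym2 V)) : Finset (Sym2 V) :=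
  (M.erase e).filter (fun f => ¬ ∃ f' ∈ F, ∃ v : V, v ∈ f ∧ v ∈ f') ∪ F

lemma sdiff_insert_sdiff_eq_filter_meets (hM : IsMatchingF G M) (hM' : IsMaximalMatchingF G M')
    (hsub : insert e (M' \ M'.filter fun f => ∃ v : V, v ∈ e ∧ v ∈ f) ⊆ M) :
    M \ insert e (M' \ M'.filter fun f => ∃ v : V, v ∈ e ∧ v ∈ f) =
      (M.erase e).filter fun f =>
        ∃ f' ∈ M'.filter (fun f => ∃ v : V, v ∈ e ∧ v ∈ f), ∃ v : V, v ∈ f ∧ v ∈ f' := by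
  set F := M'.filter fun f => ∃ v : V, v ∈ e ∧ v ∈ f
  have heM : e ∈ M := hsub (mem_insert_self _ _)
  ext f
  simp only [mem_sdiff, mem_insert, mem_erase, mem_filter, not_or]
  constructor
  · rintro ⟨hfM, hfe, hfMF⟩
    -- otherwise `f ∈ F` would meet `e` inside the matching `M`
    have hfM' : f ∉ M' := fun h => hfe <| by
      obtain ⟨v, hve, hvf⟩ := (mem_filter.mp (not_not.mp fun hfF => hfMF ⟨h, hfF⟩)).2
      exact hM.eq_of_mem_of_mem hfM heM hvf hve
    obtain ⟨g, hgM', v, hvf, hvg⟩ := hM'.exists_meets_of_notMem (hM.1 f hfM) hfM'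
    refine ⟨⟨hfe, hfM⟩, g, ?_, v, hvf, hvg⟩
    by_contra hgF
    have hgM : g ∈ M := hsub (mem_insert_of_mem (mem_sdiff.mpr ⟨hgM', hgF⟩))
    exact hfM' (hM.eq_of_mem_of_mem hfM hgM hvf hvg ▸ hgM')
  · rintro ⟨⟨hfe, hfM⟩, f', hf'F, v, hvf, hvf'⟩
    refine ⟨hfM, hfe, fun ⟨hfM', hfF⟩ => hfF ?_⟩
    rwa [IsMatchingF.eq_of_mem_of_mem hM'.1 hfM' (mem_filter.mp hf'F).1 hvf hvf']

lemma eq_child (hM : IsMatchingF G M) (hM' : IsMaximalMatchingF G M') (heM' : e ∉ M')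
    (hsub : insert e (M' \ M'.filter fun f => ∃ v : V, v ∈ e ∧ v ∈ f) ⊆ M) :
    M' = child M e (M'.filter fun f => ∃ v : V, v ∈ e ∧ v ∈ f) := by
  have hA := sdiff_insert_sdiff_eq_filter_meets hM hM' hsub
  set F := M'.filter fun f => ∃ v : V, v ∈ e ∧ v ∈ f
  have heF : e ∉ M' \ F := fun h => heM' (mem_sdiff.mp h).1
  rw [child, filter_not, ← hA, erase_sdiff_comm, sdiff_sdiff_right_self, inf_eq_inter,
    inter_eq_right.mpr hsub, erase_insert heF, sdiff_union_of_subset (filter_subset _ _)]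

end Child

lemma card_filter_meets_edgeFinset_le [Fintype V] [DecidableEq V] (G : SimpleGraph V)
    [DecidableRel G.Adj] (e : Sym2 V) :
    (G.edgeFinset.filter fun f => ∃ v : V, v ∈ e ∧ v ∈ f).card ≤ 2 * G.maxDegree := by
  induction e using Sym2.ind with | _ u w =>
  have hsub : (G.edgeFinset.filter fun f => ∃ v : V, v ∈ s(u, w) ∧ v ∈ f) ⊆
      G.incidenceFinset u ∪ G.incidenceFinset w := by
    intro f hf
    simp only [mem_filter, Sym2.mem_iff, mem_edgeFinset] at hf
    obtain ⟨hfG, v, rfl | rfl, hvf⟩ := hf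
    · exact mem_union_left _ ((mem_incidenceFinset _ _ _).mpr ⟨hfG, hvf⟩)
    · exact mem_union_right _ ((mem_incidenceFinset _ _ _).mpr ⟨hfG, hvf⟩)
  calc _ ≤ _ := card_le_card hsub
    _ ≤ _ := card_union_le _ _
    _ ≤ 2 * G.maxDegree := by
      rw [card_incidenceFinset_eq_degree, card_incidenceFinset_eq_degree, two_mul]
      exact add_le_add (G.degree_le_maxDegree u) (G.degree_le_maxDegree w)

lemma card_filter_card_le_two_powerset_le {α : Type*} [DecidableEq α] (s : Finset α) :
    (s.powerset.filter (·.card ≤ 2)).card ≤ s.card.choose 2 + s.card + 1 :=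
  calc _ ≤ ((range 3).biUnion fun i => s.powersetCard i).card := by
        refine card_le_card fun t ht => ?_
        simp only [mem_filter, mem_powerset] at ht
        simp only [mem_biUnion, mem_range, mem_powersetCard]
        exact ⟨t.card, by omega, ht.1, rfl⟩
    _ ≤ ∑ i ∈ range 3, (s.powersetCard i).card := card_biUnion_le
    _ = _ := by simp [sum_range_succ, card_powersetCard]; ring

lemma Nat.choose_two_two_mul (d : ℕ) : (2 * d).choose 2 = 2 * d.choose 2 + d ^ 2 := by
  rw [two_mul, Nat.add_choose_eq]
  simp [Finset.Nat.antidiagonal_succ]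
  ring

lemma Nat.choose_two_two_mul_add_le_sq (d : ℕ) :
    (2 * d).choose 2 + 2 * d + 1 ≤ (d.choose 2 + d + 1) ^ 2 := by
  rw [Nat.choose_two_two_mul]
  nlinarith [Nat.zero_le (d.choose 2)]

lemma card_image_child_le [Fintype V] [DecidableEq V] (G : SimpleGraph V) [DecidableRel G.Adj]
    (M : Finset (Sym2 V)) (e : Sym2 V) :
    (((G.edgeFinset.filter fun f => ∃ v : V, v ∈ e ∧ v ∈ f).powerset.filter
      (·.card ≤ 2)).image (child M e)).card ≤ (G.maxDegree.choose 2 + G.maxDegree + 1) ^ 2 := by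
  have hΓ := card_filter_meets_edgeFinset_le G e
  calc _ ≤ _ := card_image_le
    _ ≤ _ := card_filter_card_le_two_powerset_le _
    _ ≤ (2 * G.maxDegree).choose 2 + 2 * G.maxDegree + 1 := by gcongr
    _ ≤ _ := Nat.choose_two_two_mul_add_le_sq _

theorem stmt17 [Fintype V] [DecidableEq V] (G : SimpleGraph V) [DecidableRel G.Adj]
    (M : Finset (Sym2 V)) (hM : IsMaximalMatchingF G M) :
    (∀ (M' F : Finset (Sym2 V)) (e : Sym2 V),
        IsMaximalMatchingF G M' → (symmDiff M M').card ≤ 5 →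
        e ∈ M → e ∉ M' →
        F = M'.filter (fun f => ∃ v : V, v ∈ e ∧ v ∈ f) →
        insert e (M' \ F) ⊆ M →
        M \ insert e (M' \ F) =
          (M.erase e).filter (fun f => ∃ f' ∈ F, ∃ v : V, v ∈ f ∧ v ∈ f')) ∧
      {M' : Finset (Sym2 V) | IsMaximalMatchingF G M' ∧ (symmDiff M M').card ≤ 5 ∧
          ∃ e ∈ M, e ∉ M' ∧
            insert e (M' \ M'.filter (fun f => ∃ v : V, v ∈ e ∧ v ∈ f)) ⊆ M}.ncard ≤
        M.card * (G.maxDegree.choose 2 + G.maxDegree + 1) ^ 2 := by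
  refine ⟨fun M' F e hM' _ _ _ hF hsub => ?_, ?_⟩
  · subst hF
    exact sdiff_insert_sdiff_eq_filter_meets hM.1 hM' hsub
  set children := M.biUnion fun e =>
    ((G.edgeFinset.filter fun f => ∃ v : V, v ∈ e ∧ v ∈ f).powerset.filter (·.card ≤ 2)).image
      (child M e)
  calc _ ≤ children.card := by
        rw [← Set.ncard_coe_finset]
        refine Set.ncard_le_ncard ?_ children.finite_toSet
        rintro M' ⟨hM', -, e, heM, heM', hsub⟩
        have hΓ : M' ⊆ G.edgeFinset := fun f hf => mem_edgeFinset.mpr (hM'.1.1 f hf)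
        refine mem_biUnion.mpr ⟨e, heM, mem_image.mpr ⟨_, ?_, (eq_child hM.1 hM' heM' hsub).symm⟩⟩
        exact mem_filter.mpr ⟨mem_powerset.mpr (filter_subset_filter _ hΓ),
          hM'.1.card_filter_meets_le_two e⟩
    _ ≤ _ := card_biUnion_le_card_mul _ _ _ fun e _ => card_image_child_le G M e
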